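/- arXiv:1811.02699 — 3 statements merged into one kernel-verified Lean document; each statement's English description precedes it below -/
import Mathlib

section
/- Let D be an almost valid drawing (with threshold δ) of a finite signed graph G in the circumference, and let a be a vertex violating strict validity. Let ε = (1/4)·min over vertices i of d(D(i), D(next(i))) > 0, where next(i) is the cyclic successor of i in the circular order induced by D. Then the drawing D' obtained from D by moving a by ε (in the direction away from its farthest right-half positive neighbor at distance δ) is an almost valid drawing in which a satisfies the strict validity condition, and every vertex that satisfied strict validity in D still satisfies it in D'. -/
/-!
Measure every position by its counterclockwise angle `cmod (x - D a)` from `a`: the positive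
neighbour `jr` sits at angle `δ` and the negative neighbour `kl` at angle `2π - δ`. Moving `a`
forward by `ε` lowers every angle by `ε`, and distinct vertices are more than `ε` apart. So a
positive neighbour of `a` (at angle at most `δ`, or beyond `kl` by more than `ε`) ends up closer
than `δ`, and a negative neighbour (at angle at least `δ`, hence beyond `jr` by more than `ε`)
ends up farther than `δ`. Edges not at `a` keep their length, so almost validity survives and
every triple through `a` becomes strict.
-/

open Real Set

noncomputable def cmod (x : ℝ) : ℝ := x - 2 * π * ⌊x / (2 * π)⌋

noncomputable def cdist (p q : ℝ) : ℝ := min (cmod (p - q)) (cmod (q - p))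

def Mr (p : ℝ) : Set ℝ := {x | ∃ t, 0 ≤ t ∧ t ≤ π ∧ x = cmod (p + t)}
def Ml (p : ℝ) : Set ℝ := {x | ∃ t, 0 ≤ t ∧ t ≤ π ∧ x = cmod (p - t)}

structure SignedGraph (V : Type*) where
  pos : SimpleGraph V
  neg : SimpleGraph V
  disjoint : ∀ i j, ¬ (pos.Adj i j ∧ neg.Adj i j)

def IsDrawing {V : Type*} (D : V → ℝ) : Prop :=
  Function.Injective D ∧ ∀ v, D v ∈ Set.Ico (0 : ℝ) (2 * π)

def IsValidDrawing {V : Type*} (G : SignedGraph V) (D : V → ℝ) : Prop :=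
  IsDrawing D ∧ ∀ i j k, G.pos.Adj i j → G.neg.Adj i k →
    cdist (D i) (D j) < cdist (D i) (D k)

def IsAlmostValidDrawing {V : Type*} (G : SignedGraph V) (D : V → ℝ) : Prop :=
  IsDrawing D ∧ ∃ δ > 0, ∀ i j k, G.pos.Adj i j → G.neg.Adj i k →
    cdist (D i) (D j) ≤ δ ∧ δ ≤ cdist (D i) (D k)

def arcC (s ℓ : ℝ) : Set ℝ := {x | x ∈ Set.Ico (0 : ℝ) (2 * π) ∧ cmod (x - s) ≤ ℓ}

def arcGen (s ℓ : ℝ) (inl inr : Bool) : Set ℝ :=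
  {x | x ∈ Set.Ico (0 : ℝ) (2 * π) ∧
    (inl = false → 0 < cmod (x - s)) ∧
    (inr = true → cmod (x - s) ≤ ℓ) ∧ (inr = false → cmod (x - s) < ℓ)}

def IsCircularArcModel {V : Type*} (G : SimpleGraph V) (A : V → Set ℝ) : Prop :=
  (∀ v, ∃ s ℓ, 0 < ℓ ∧ ℓ < 2 * π ∧ A v = arcC s ℓ) ∧
  ∀ i j, i ≠ j → (G.Adj i j ↔ (A i ∩ A j).Nonempty)

def IsCircularArcGraph {V : Type*} (G : SimpleGraph V) : Prop :=
  ∃ A, IsCircularArcModel G A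

def IsProperCircularArcGraph {V : Type*} (G : SimpleGraph V) : Prop :=
  ∃ A : V → Set ℝ, IsCircularArcModel G A ∧ ∀ i j, ¬ A i ⊂ A j

lemma cmod_eq_toIcoMod (x : ℝ) : cmod x = toIcoMod two_pi_pos 0 x := by
  rw [toIcoMod_eq_fract_mul, Int.fract, cmod, sub_mul, div_mul_cancel₀ _ two_pi_pos.ne']
  ring

lemma cmod_mem_Ico (x : ℝ) : cmod x ∈ Ico 0 (2 * π) := by
  simpa only [cmod_eq_toIcoMod] using toIcoMod_mem_Ico' two_pi_pos x

lemma cmod_eq_self {x : ℝ} (hx : x ∈ Ico 0 (2 * π)) : cmod x = x := by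
  rwa [cmod_eq_toIcoMod, toIcoMod_eq_self, zero_add]

lemma cmod_zero : cmod 0 = 0 := cmod_eq_self ⟨le_rfl, two_pi_pos⟩

lemma cmod_add_two_pi (x : ℝ) : cmod (x + 2 * π) = cmod x := by
  simp only [cmod_eq_toIcoMod, toIcoMod_add_right]

lemma cmod_cmod_sub (y z : ℝ) : cmod (cmod y - z) = cmod (y - z) := by
  rw [cmod_eq_toIcoMod y, ← self_sub_toIcoDiv_zsmul, sub_right_comm, cmod_eq_toIcoMod,
    toIcoMod_sub_zsmul, cmod_eq_toIcoMod]

lemma cmod_sub_cmod (y z : ℝ) : cmod (z - cmod y) = cmod (z - y) := by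
  rw [cmod_eq_toIcoMod y, ← self_sub_toIcoDiv_zsmul, sub_sub_eq_add_sub, add_sub_right_comm,
    cmod_eq_toIcoMod, toIcoMod_add_zsmul, cmod_eq_toIcoMod]

lemma cmod_neg {x : ℝ} (hx : cmod x ≠ 0) : cmod (-x) = 2 * π - cmod x := by
  rw [cmod_eq_toIcoMod] at hx ⊢
  rw [cmod_eq_toIcoMod, toIcoMod_neg, neg_zero,
    ← (AddCommGroup.not_modEq_iff_toIcoMod_eq_toIocMod _).mp
      (mt (AddCommGroup.modEq_iff_toIcoMod_eq_left _).mp hx)]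

lemma eq_of_cmod_sub_eq_zero {p q : ℝ} (hp : p ∈ Ico 0 (2 * π)) (hq : q ∈ Ico 0 (2 * π))
    (h : cmod (q - p) = 0) : p = q := by
  rcases le_or_gt p q with hpq | hpq
  · rw [cmod_eq_self ⟨by linarith, by linarith [hq.2, hp.1]⟩] at h
    linarith
  · rw [← cmod_add_two_pi, cmod_eq_self ⟨by linarith [hq.1, hp.2], by linarith⟩] at h
    linarith [hq.1, hp.2]

lemma cdist_comm (p q : ℝ) : cdist p q = cdist q p := min_comm _ _

lemma cdist_le_cmod_sub (p q : ℝ) : cdist p q ≤ cmod (q - p) := min_le_right _ _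

lemma cdist_eq_min_cmod (p q : ℝ) :
    cdist p q = min (cmod (q - p)) (2 * π - cmod (q - p)) := by
  by_cases h : cmod (q - p) = 0
  · rw [cdist, h, min_eq_right (cmod_mem_Ico _).1, sub_zero, min_eq_left two_pi_pos.le]
  · rw [cdist, ← neg_sub, cmod_neg h, min_comm]

lemma cdist_pos_of_ne {p q : ℝ} (hp : p ∈ Ico 0 (2 * π)) (hq : q ∈ Ico 0 (2 * π))
    (hpq : p ≠ q) : 0 < cdist p q := by
  have hc := cmod_mem_Ico (q - p)
  have hc0 : cmod (q - p) ≠ 0 := fun h => hpq (eq_of_cmod_sub_eq_zero hp hq h)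
  rw [cdist_eq_min_cmod]
  exact lt_min (hc.1.lt_of_ne' hc0) (by linarith [hc.2])

lemma cdist_le_cmod_sub_sub {p x y : ℝ} (h : cmod (y - p) ≤ cmod (x - p)) :
    cdist y x ≤ cmod (x - p) - cmod (y - p) := by
  have hx := cmod_mem_Ico (x - p)
  have hy := cmod_mem_Ico (y - p)
  calc cdist y x ≤ cmod (x - y) := cdist_le_cmod_sub y x
    _ = cmod (cmod (x - p) - cmod (y - p)) := by
      rw [cmod_cmod_sub, cmod_sub_cmod, sub_sub_sub_cancel_right]
    _ = cmod (x - p) - cmod (y - p) := cmod_eq_self ⟨by linarith, by linarith [hx.2, hy.1]⟩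

lemma cmod_sub_eq_cdist_of_mem_Mr {p x : ℝ} (hx : x ∈ Mr p) : cmod (x - p) = cdist p x := by
  obtain ⟨t, ht0, htπ, rfl⟩ := hx
  have ht : cmod (cmod (p + t) - p) = t := by
    rw [cmod_cmod_sub, add_sub_cancel_left, cmod_eq_self ⟨ht0, by linarith [pi_pos]⟩]
  rw [cdist_eq_min_cmod, ht, min_eq_left (by linarith)]

lemma cmod_sub_eq_two_pi_sub_cdist_of_mem_Ml {p x : ℝ} (hx : x ∈ Ml p) (hpx : 0 < cdist p x) :
    cmod (x - p) = 2 * π - cdist p x := by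
  obtain ⟨t, ht0, htπ, rfl⟩ := hx
  have ht : cmod t = t := cmod_eq_self ⟨ht0, by linarith [pi_pos]⟩
  have hθ : cmod (cmod (p - t) - p) = cmod (-t) := by rw [cmod_cmod_sub, sub_sub_cancel_left]
  rw [cdist_eq_min_cmod, hθ] at hpx ⊢
  rcases ht0.eq_or_lt with rfl | htpos
  · simp only [neg_zero, cmod_zero, sub_zero, lt_self_iff_false, min_eq_left two_pi_pos.le]
      at hpx
  · rw [cmod_neg (ht.symm ▸ htpos.ne'), ht, min_eq_right (by linarith)]
    ring

lemma cmod_sub_cmod_add {p q ε : ℝ} (hε : 0 ≤ ε) (h : ε ≤ cmod (q - p)) :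
    cmod (q - cmod (p + ε)) = cmod (q - p) - ε := by
  rw [cmod_sub_cmod, sub_add_eq_sub_sub, ← cmod_cmod_sub,
    cmod_eq_self ⟨by linarith, by linarith [(cmod_mem_Ico (q - p)).2]⟩]

lemma cdist_cmod_add {p q ε : ℝ} (hε : 0 ≤ ε) (h : ε ≤ cmod (q - p)) :
    cdist (cmod (p + ε)) q = min (cmod (q - p) - ε) (2 * π - (cmod (q - p) - ε)) := by
  rw [cdist_eq_min_cmod, cmod_sub_cmod_add hε h]

lemma cmod_add_ne {p q ε : ℝ} (hε : 0 < ε) (hq : ε < cdist p q) : cmod (p + ε) ≠ q := by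
  intro h
  have hθ := cmod_sub_cmod_add hε.le (hq.trans_le (cdist_le_cmod_sub p q)).le
  rw [h, sub_self, cmod_zero] at hθ
  linarith [cdist_le_cmod_sub p q]

/-- A point within `δ` of `p` lies at angle at most `δ` from `p`, or at least the angle
`2π - δ` of `k` and then, being more than `ε` away from `k`, beyond it by more than `ε`. -/
lemma cdist_cmod_add_lt {p q k δ ε : ℝ} (hε : 0 < ε) (hq : ε < cdist p q)
    (hqδ : cdist p q ≤ δ) (hk : cmod (k - p) = 2 * π - δ) (hkq : ε < cdist k q) :
    cdist (cmod (p + ε)) q < δ := by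
  have hθ : ε < cmod (q - p) := hq.trans_le (cdist_le_cmod_sub p q)
  rw [cdist_cmod_add hε.le hθ.le, min_lt_iff]
  rw [cdist_eq_min_cmod, min_le_iff] at hqδ
  rcases hqδ with hθδ | hθδ
  · left
    linarith
  · have hgap := cdist_le_cmod_sub_sub (p := p) (x := q) (y := k) (by linarith)
    right
    linarith

lemma lt_cdist_cmod_add {p q r δ ε : ℝ} (hε : 0 < ε) (hq : ε < cdist p q)
    (hδq : δ ≤ cdist p q) (hr : cmod (r - p) = δ) (hrq : ε < cdist r q) :
    δ < cdist (cmod (p + ε)) q := by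
  have hθ : ε < cmod (q - p) := hq.trans_le (cdist_le_cmod_sub p q)
  rw [cdist_eq_min_cmod, le_min_iff] at hδq
  have hgap := cdist_le_cmod_sub_sub (p := p) (x := q) (y := r) (by linarith)
  rw [cdist_cmod_add hε.le hθ.le, lt_min_iff]
  constructor <;> linarith

open Function

lemma IsDrawing.update {V : Type*} [DecidableEq V] {D : V → ℝ} (hD : IsDrawing D) {a : V}
    {x : ℝ} (hx : x ∈ Ico 0 (2 * π)) (hne : ∀ v, v ≠ a → D v ≠ x) :
    IsDrawing (update D a x) := by
  refine ⟨fun v w hvw => ?_, fun v => ?_⟩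
  · by_cases hv : v = a <;> by_cases hw : w = a
    · rw [hv, hw]
    · subst hv
      rw [update_self, update_of_ne hw] at hvw
      exact absurd hvw.symm (hne w hw)
    · subst hw
      rw [update_self, update_of_ne hv] at hvw
      exact absurd hvw (hne v hv)
    · rw [update_of_ne hv, update_of_ne hw] at hvw
      exact hD.1 hvw
  · rcases eq_or_ne v a with rfl | hv
    · rwa [update_self]
    · rw [update_of_ne hv]
      exact hD.2 v

lemma cdist_update_of_adj {V : Type*} [DecidableEq V] {H : SimpleGraph V} {D : V → ℝ}
    {a i j : V} {p : ℝ} {P : ℝ → Prop} (hP : ∀ j, H.Adj a j → P (cdist p (D j)))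
    (hij : H.Adj i j) (ha : i = a ∨ j = a) :
    P (cdist (update D a p i) (update D a p j)) := by
  rcases ha with rfl | rfl
  · rw [update_self, update_of_ne hij.ne']
    exact hP j hij
  · rw [update_self, update_of_ne hij.ne, cdist_comm]
    exact hP i hij.symm

namespace SignedGraph

variable {V : Type*}

def IsAlmostValidWith (G : SignedGraph V) (D : V → ℝ) (δ : ℝ) : Prop :=
  ∀ i j k, G.pos.Adj i j → G.neg.Adj i k → cdist (D i) (D j) ≤ δ ∧ δ ≤ cdist (D i) (D k)

def IsStrictlyValidAt (G : SignedGraph V) (D : V → ℝ) (b : V) : Prop :=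
  ∀ j k, G.pos.Adj b j → G.neg.Adj b k → cdist (D b) (D j) < cdist (D b) (D k)

variable [DecidableEq V] {G : SignedGraph V} {D : V → ℝ} {δ p : ℝ} {a : V}

lemma IsAlmostValidWith.update (hG : G.IsAlmostValidWith D δ)
    (hpos : ∀ j, G.pos.Adj a j → cdist p (D j) < δ)
    (hneg : ∀ k, G.neg.Adj a k → δ < cdist p (D k)) :
    G.IsAlmostValidWith (update D a p) δ := by
  intro i j k hij hik
  constructor
  · by_cases h : i = a ∨ j = a
    · exact (cdist_update_of_adj (P := (· < δ)) hpos hij h).le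
    · rw [not_or] at h
      rw [update_of_ne h.1, update_of_ne h.2]
      exact (hG i j k hij hik).1
  · by_cases h : i = a ∨ k = a
    · exact (cdist_update_of_adj (P := (δ < ·)) hneg hik h).le
    · rw [not_or] at h
      rw [update_of_ne h.1, update_of_ne h.2]
      exact (hG i j k hij hik).2

lemma isStrictlyValidAt_update_self (hpos : ∀ j, G.pos.Adj a j → cdist p (D j) < δ)
    (hneg : ∀ k, G.neg.Adj a k → δ < cdist p (D k)) :
    G.IsStrictlyValidAt (update D a p) a := fun _ _ hj hk =>
  (cdist_update_of_adj (P := (· < δ)) hpos hj (.inl rfl)).trans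
    (cdist_update_of_adj (P := (δ < ·)) hneg hk (.inl rfl))

lemma IsStrictlyValidAt.update (hG : G.IsAlmostValidWith D δ)
    (hpos : ∀ j, G.pos.Adj a j → cdist p (D j) < δ)
    (hneg : ∀ k, G.neg.Adj a k → δ < cdist p (D k)) {b : V} (hb : G.IsStrictlyValidAt D b) :
    G.IsStrictlyValidAt (update D a p) b := by
  intro j k hj hk
  have hG' := hG.update hpos hneg b j k hj hk
  by_cases hja : b = a ∨ j = a
  · exact (cdist_update_of_adj (P := (· < δ)) hpos hj hja).trans_le hG'.2
  by_cases hka : b = a ∨ k = a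
  · exact hG'.1.trans_lt (cdist_update_of_adj (P := (δ < ·)) hneg hk hka)
  rw [not_or] at hja hka
  rw [update_of_ne hja.1, update_of_ne hja.2, update_of_ne hka.2]
  exact hb j k hj hk

end SignedGraph

theorem move_vertex_step_general {V : Type*} [DecidableEq V]
    (G : SignedGraph V) (D : V → ℝ) (hD : IsDrawing D)
    (δ : ℝ) (hδpos : 0 < δ)
    (halmost : ∀ i j k, G.pos.Adj i j → G.neg.Adj i k →
      cdist (D i) (D j) ≤ δ ∧ δ ≤ cdist (D i) (D k))
    (a jr kl : V)
    (hjr : G.pos.Adj a jr) (hjrR : D jr ∈ Mr (D a))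
    (hjrδ : cdist (D a) (D jr) = δ)
    (hkl : G.neg.Adj a kl) (hklL : D kl ∈ Ml (D a))
    (hklδ : cdist (D a) (D kl) = δ)
    (ε : ℝ)
    (hεlb : ∀ i j : V, i ≠ j → 4 * ε ≤ cdist (D i) (D j))
    (hεmin : ∃ i j : V, i ≠ j ∧ 4 * ε = cdist (D i) (D j))
    (D' : V → ℝ)
    (hD' : D' = fun i => if i = a then cmod (D a + ε) else D i) :
    IsDrawing D' ∧
    (∀ i j k, G.pos.Adj i j → G.neg.Adj i k →
      cdist (D' i) (D' j) ≤ δ ∧ δ ≤ cdist (D' i) (D' k)) ∧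
    (∀ j k, G.pos.Adj a j → G.neg.Adj a k →
      cdist (D' a) (D' j) < cdist (D' a) (D' k)) ∧
    (∀ b : V,
      (∀ j k, G.pos.Adj b j → G.neg.Adj b k →
        cdist (D b) (D j) < cdist (D b) (D k)) →
      (∀ j k, G.pos.Adj b j → G.neg.Adj b k →
        cdist (D' b) (D' j) < cdist (D' b) (D' k))) := by
  obtain rfl : D' = update D a (cmod (D a + ε)) := by
    rw [hD']
    exact funext fun i => (update_apply D a _ i).symm
  have hε : 0 < ε := by
    obtain ⟨i, j, hij, hij_eq⟩ := hεmin
    linarith [cdist_pos_of_ne (hD.2 i) (hD.2 j) (hD.1.ne hij)]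
  have hgap : ∀ i j, i ≠ j → ε < cdist (D i) (D j) := fun i j hij => by
    linarith [hεlb i j hij]
  have hjr_angle : cmod (D jr - D a) = δ := hjrδ ▸ cmod_sub_eq_cdist_of_mem_Mr hjrR
  have hkl_angle : cmod (D kl - D a) = 2 * π - δ :=
    hklδ ▸ cmod_sub_eq_two_pi_sub_cdist_of_mem_Ml hklL (hklδ ▸ hδpos)
  have hpos : ∀ j, G.pos.Adj a j → cdist (cmod (D a + ε)) (D j) < δ := fun j hj =>
    cdist_cmod_add_lt hε (hgap a j hj.ne) (halmost a j kl hj hkl).1 hkl_angle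
      (hgap kl j fun h => G.disjoint a j ⟨hj, h ▸ hkl⟩)
  have hneg : ∀ k, G.neg.Adj a k → δ < cdist (cmod (D a + ε)) (D k) := fun k hk =>
    lt_cdist_cmod_add hε (hgap a k hk.ne) (halmost a jr k hjr hk).2 hjr_angle
      (hgap jr k fun h => G.disjoint a k ⟨h ▸ hjr, hk⟩)
  exact ⟨hD.update (cmod_mem_Ico _) fun v hv => (cmod_add_ne hε (hgap a v hv.symm)).symm,
    SignedGraph.IsAlmostValidWith.update halmost hpos hneg,
    SignedGraph.isStrictlyValidAt_update_self hpos hneg,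
    fun _ hb => SignedGraph.IsStrictlyValidAt.update halmost hpos hneg hb⟩

/-- One step of the correction procedure: D is an almost valid drawing with
threshold δ of a finite signed graph G, and the vertex a violates strict
validity, with its farthest right-half positive neighbor jr at distance
exactly δ and its closest left-half negative neighbor kl at distance exactly
δ. Let ε be a quarter of the minimum gap between (images of) consecutive
vertices in the cyclic order induced by D, i.e. a quarter of the minimum of
cdist over distinct pairs of vertices. Then the drawing D' obtained by moving
a by ε (towards the right half, i.e. away from kl) is still almost valid with
threshold δ, the vertex a now satisfies the strict validity condition, and
every vertex that satisfied strict validity in D still satisfies it in D'. -/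
theorem move_vertex_step {V : Type*} [Fintype V] [DecidableEq V]
    (G : SignedGraph V) (D : V → ℝ) (hD : IsDrawing D)
    (δ : ℝ) (hδpos : 0 < δ)
    (halmost : ∀ i j k, G.pos.Adj i j → G.neg.Adj i k →
      cdist (D i) (D j) ≤ δ ∧ δ ≤ cdist (D i) (D k))
    (a jr kl : V)
    (hjr : G.pos.Adj a jr) (hjrR : D jr ∈ Mr (D a))
    (hjrδ : cdist (D a) (D jr) = δ)
    (hjrmax : ∀ j, G.pos.Adj a j → D j ∈ Mr (D a) →
      cdist (D a) (D j) ≤ cdist (D a) (D jr))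
    (hkl : G.neg.Adj a kl) (hklL : D kl ∈ Ml (D a))
    (hklδ : cdist (D a) (D kl) = δ)
    (hklmin : ∀ k, G.neg.Adj a k → D k ∈ Ml (D a) →
      cdist (D a) (D kl) ≤ cdist (D a) (D k))
    (ε : ℝ)
    (hεlb : ∀ i j : V, i ≠ j → 4 * ε ≤ cdist (D i) (D j))
    (hεmin : ∃ i j : V, i ≠ j ∧ 4 * ε = cdist (D i) (D j))
    (D' : V → ℝ)
    (hD' : D' = fun i => if i = a then cmod (D a + ε) else D i) :
    IsDrawing D' ∧
    (∀ i j k, G.pos.Adj i j → G.neg.Adj i k →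
      cdist (D' i) (D' j) ≤ δ ∧ δ ≤ cdist (D' i) (D' k)) ∧
    (∀ j k, G.pos.Adj a j → G.neg.Adj a k →
      cdist (D' a) (D' j) < cdist (D' a) (D' k)) ∧
    (∀ b : V,
      (∀ j k, G.pos.Adj b j → G.neg.Adj b k →
        cdist (D b) (D j) < cdist (D b) (D k)) →
      (∀ j k, G.pos.Adj b j → G.neg.Adj b k →
        cdist (D' b) (D' j) < cdist (D' b) (D' k))) :=
  move_vertex_step_general G D hD δ hδpos halmost a jr kl hjr hjrR hjrδ hkl hklL hklδ ε hεlb hεmin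
    D' hD'
end

section
/- Let G be a finite graph that admits a circular arc model in which all arcs have length δ (arcs possibly open or closed at endpoints). Define the drawing D sending each vertex i to the clockwise endpoint s_i of its arc (assuming these endpoints are pairwise distinct). Then for every edge ij of G, d(s_i, s_j) ≤ δ, and for every non-edge ij, d(s_i, s_j) ≥ δ; in particular, the complete signed graph with E⁺ = E(G) and E⁻ the non-edges has an almost valid drawing in the circumference. -/
open Real Set

lemma cmod_sub_cmod_s7 (u v : ℝ) : cmod (cmod u - cmod v) = cmod (u - v) := by
  have : cmod u - cmod v = (u - v) - (⌊u / (2 * π)⌋ - ⌊v / (2 * π)⌋) • (2 * π) := by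
    rw [zsmul_eq_mul, cmod, cmod]; push_cast; ring
  rw [this, cmod_eq_toIcoMod, toIcoMod_sub_zsmul, cmod_eq_toIcoMod]

lemma cmod_cmod_sub_s7 (u v : ℝ) : cmod (cmod u - v) = cmod (u - v) := by
  have : cmod u - v = (u - v) - ⌊u / (2 * π)⌋ • (2 * π) := by
    rw [zsmul_eq_mul, cmod]; ring
  rw [this, cmod_eq_toIcoMod, toIcoMod_sub_zsmul, cmod_eq_toIcoMod]

lemma cmod_pos_of_ne_zero {x : ℝ} (h₁ : -(2 * π) < x) (h₂ : x < 2 * π) (hx : x ≠ 0) :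
    0 < cmod x := by
  rcases hx.lt_or_gt with hneg | hpos
  · rw [← cmod_add_two_pi, cmod_eq_self ⟨by linarith, by linarith⟩]
    linarith
  · rwa [cmod_eq_self ⟨hpos.le, h₂⟩]

lemma cmod_sub_pos {p q : ℝ} (hp : p ∈ Ico 0 (2 * π)) (hq : q ∈ Ico 0 (2 * π))
    (hpq : p ≠ q) :
    0 < cmod (q - p) :=
  cmod_pos_of_ne_zero (by linarith [hp.2, hq.1]) (by linarith [hp.1, hq.2])
    (sub_ne_zero.2 hpq.symm)

lemma cmod_sub_eq_sub_cmod_sub {x p q : ℝ} (h : cmod (x - p) ≤ cmod (x - q)) :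
    cmod (p - q) = cmod (x - q) - cmod (x - p) := by
  rw [← cmod_eq_self (x := cmod (x - q) - cmod (x - p)), cmod_sub_cmod_s7, sub_sub_sub_cancel_left]
  exact ⟨sub_nonneg.2 h, by linarith [(cmod_mem_Ico (x - q)).2, (cmod_mem_Ico (x - p)).1]⟩

lemma cdist_le_of_cmod_sub_le {x p q ℓ : ℝ} (hp : cmod (x - p) ≤ ℓ)
    (hq : cmod (x - q) ≤ ℓ) :
    cdist p q ≤ ℓ := by
  wlog h : cmod (x - p) ≤ cmod (x - q) generalizing p q
  · rw [cdist_comm]; exact this hq hp (le_of_not_ge h)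
  calc cdist p q ≤ cmod (p - q) := min_le_left _ _
    _ = cmod (x - q) - cmod (x - p) := cmod_sub_eq_sub_cmod_sub h
    _ ≤ ℓ := by linarith [(cmod_mem_Ico (x - p)).1]

lemma cmod_sub_le_of_mem_arcGen {x s ℓ : ℝ} {inl inr : Bool} (hx : x ∈ arcGen s ℓ inl inr) :
    cmod (x - s) ≤ ℓ := by
  cases inr
  · exact (hx.2.2.2 rfl).le
  · exact hx.2.2.1 rfl

lemma mem_arcGen_of_cmod_sub_mem_Ioo {x s ℓ : ℝ} (inl inr : Bool) (hx : x ∈ Ico 0 (2 * π))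
    (h : cmod (x - s) ∈ Ioo 0 ℓ) : x ∈ arcGen s ℓ inl inr :=
  ⟨hx, fun _ => h.1, fun _ => h.2.le, fun _ => h.2⟩

lemma cdist_le_of_arcGen_inter_nonempty {p q ℓ : ℝ} {a b c d : Bool}
    (h : (arcGen p ℓ a b ∩ arcGen q ℓ c d).Nonempty) : cdist p q ≤ ℓ :=
  let ⟨_, hp, hq⟩ := h
  cdist_le_of_cmod_sub_le (cmod_sub_le_of_mem_arcGen hp) (cmod_sub_le_of_mem_arcGen hq)

lemma arcGen_inter_nonempty_of_cmod_sub_lt {p q ℓ : ℝ} (a b c d : Bool)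
    (h₀ : 0 < cmod (q - p)) (hℓ : cmod (q - p) < ℓ) :
    (arcGen p ℓ a b ∩ arcGen q ℓ c d).Nonempty := by
  obtain ⟨t, hγt, htℓ⟩ := exists_between (lt_min hℓ (cmod_mem_Ico (q - p)).2)
  have ht : t ∈ Ico 0 (2 * π) := ⟨by linarith, htℓ.trans_le (min_le_right _ _)⟩
  have hxp : cmod (cmod (p + t) - p) = t := by
    rw [cmod_cmod_sub_s7, add_sub_cancel_left, cmod_eq_self ht]
  have hxq : cmod (cmod (p + t) - q) = t - cmod (q - p) := by
    rw [cmod_cmod_sub_s7, show p + t - q = t - (q - p) by ring, ← cmod_sub_cmod_s7,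
      cmod_eq_self ht, cmod_eq_self]
    exact ⟨by linarith, by linarith [ht.2, h₀]⟩
  have htℓ₀ : t < ℓ := htℓ.trans_le (min_le_left _ _)
  refine ⟨cmod (p + t), mem_arcGen_of_cmod_sub_mem_Ioo _ _ (cmod_mem_Ico _) ?_,
    mem_arcGen_of_cmod_sub_mem_Ioo _ _ (cmod_mem_Ico _) ?_⟩
  · rw [hxp]; exact ⟨by linarith, htℓ₀⟩
  · rw [hxq]; exact ⟨by linarith, by linarith⟩

lemma arcGen_inter_nonempty_of_cdist_lt {p q ℓ : ℝ} (a b c d : Bool)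
    (hp : p ∈ Ico 0 (2 * π)) (hq : q ∈ Ico 0 (2 * π)) (hpq : p ≠ q) (h : cdist p q < ℓ) :
    (arcGen p ℓ a b ∩ arcGen q ℓ c d).Nonempty := by
  rcases min_lt_iff.1 h with h | h
  · exact Set.inter_comm _ _ ▸ arcGen_inter_nonempty_of_cmod_sub_lt c d a b
      (cmod_sub_pos hq hp hpq.symm) h
  · exact arcGen_inter_nonempty_of_cmod_sub_lt a b c d (cmod_sub_pos hp hq hpq) h

theorem equal_length_model_gives_almost_valid_general {V : Type*}
    (G : SimpleGraph V) (δ : ℝ) (s : V → ℝ) (bl br : V → Bool)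
    (hδ : 0 < δ)
    (hs : Function.Injective s) (hsrange : ∀ v, s v ∈ Set.Ico (0 : ℝ) (2 * π))
    (hmodel : ∀ i j : V, i ≠ j →
      (G.Adj i j ↔
        (arcGen (s i) δ (bl i) (br i) ∩ arcGen (s j) δ (bl j) (br j)).Nonempty)) :
    (∀ i j : V, G.Adj i j → cdist (s i) (s j) ≤ δ) ∧
    (∀ i j : V, i ≠ j → ¬ G.Adj i j → δ ≤ cdist (s i) (s j)) ∧
    IsAlmostValidDrawing ⟨G, Gᶜ, fun i j h => h.2.2 h.1⟩ s := by
  have edge : ∀ i j, G.Adj i j → cdist (s i) (s j) ≤ δ := fun i j hij =>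
    cdist_le_of_arcGen_inter_nonempty ((hmodel i j hij.ne).1 hij)
  have nonedge : ∀ i j, i ≠ j → ¬ G.Adj i j → δ ≤ cdist (s i) (s j) :=
    fun i j hij hnadj =>
      le_of_not_gt fun hlt => hnadj <| (hmodel i j hij).2 <|
        arcGen_inter_nonempty_of_cdist_lt _ _ _ _ (hsrange i) (hsrange j) (hs.ne hij) hlt
  exact ⟨edge, nonedge, ⟨hs, hsrange⟩, δ, hδ,
    fun i j k hij hik => ⟨edge i j hij, nonedge i k hik.1 hik.2⟩⟩

/-- If G has a circular arc model with all arcs of length δ ≤ π (arcs possibly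
open or closed at their endpoints) and pairwise distinct clockwise endpoints s,
then d(s i, s j) ≤ δ for every edge and d(s i, s j) ≥ δ for every non-edge;
in particular the complete signed graph with E⁺ = E(G) has an almost valid
drawing given by the clockwise endpoints. -/
theorem equal_length_model_gives_almost_valid {V : Type*} [Fintype V]
    (G : SimpleGraph V) (δ : ℝ) (s : V → ℝ) (bl br : V → Bool)
    (hδ : 0 < δ) (hδπ : δ ≤ π)
    (hs : Function.Injective s) (hsrange : ∀ v, s v ∈ Set.Ico (0 : ℝ) (2 * π))
    (hmodel : ∀ i j : V, i ≠ j →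
      (G.Adj i j ↔
        (arcGen (s i) δ (bl i) (br i) ∩ arcGen (s j) δ (bl j) (br j)).Nonempty)) :
    (∀ i j : V, G.Adj i j → cdist (s i) (s j) ≤ δ) ∧
    (∀ i j : V, i ≠ j → ¬ G.Adj i j → δ ≤ cdist (s i) (s j)) ∧
    IsAlmostValidDrawing ⟨G, Gᶜ, fun i j h => h.2.2 h.1⟩ s :=
  equal_length_model_gives_almost_valid_general G δ s bl br hδ hs hsrange hmodel
end

section
/- Let G be a signed graph with a valid drawing D in the circumference. For each vertex i, let i_l⁺ and i_r⁺ denote the farthest positive neighbor (including i itself) of i in the left half and right half of D(i) respectively, and define the arc A_i from the midpoint between D(i_l⁺) and D(i) to the midpoint between D(i) and D(i_r⁺). Then for any two vertices i and j with ij a negative edge of G, the arcs A_i and A_j are disjoint. -/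
open Real Set

/-- j is a positive neighbor of i, or i itself (closed positive neighborhood). -/
def posOrSelf {V : Type*} (G : SignedGraph V) (i j : V) : Prop :=
  j = i ∨ G.pos.Adj i j

/-- fl i is a farthest closed-positive neighbor of i in the left half of D i. -/
def IsFarthestLeft {V : Type*} (G : SignedGraph V) (D : V → ℝ) (fl : V → V) : Prop :=
  ∀ i, posOrSelf G i (fl i) ∧ D (fl i) ∈ Ml (D i) ∧
    ∀ j, posOrSelf G i j → D j ∈ Ml (D i) →
      cdist (D i) (D j) ≤ cdist (D i) (D (fl i))

/-- fr i is a farthest closed-positive neighbor of i in the right half of D i. -/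
def IsFarthestRight {V : Type*} (G : SignedGraph V) (D : V → ℝ) (fr : V → V) : Prop :=
  ∀ i, posOrSelf G i (fr i) ∧ D (fr i) ∈ Mr (D i) ∧
    ∀ j, posOrSelf G i j → D j ∈ Mr (D i) →
      cdist (D i) (D j) ≤ cdist (D i) (D (fr i))

/-- The arc A i, going counterclockwise from the midpoint between D (fl i) and
D i to the midpoint between D i and D (fr i) (midpoints taken along the
circle, mod 2π). -/
noncomputable def arcOf {V : Type*} (D : V → ℝ) (fl fr : V → V) (i : V) : Set ℝ :=
  arcC (cmod (D i - cdist (D i) (D (fl i)) / 2))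
    ((cdist (D i) (D (fl i)) + cdist (D i) (D (fr i))) / 2)

/-! `cdist` is the quotient metric of `AddCircle (2 * π)`. Every point of `A i` lies within
half the larger of `d(D i, D i_l⁺)` and `d(D i, D i_r⁺)` of `D i`, and for a negative edge `ij`
validity (together with injectivity, for the case `i_l⁺ = i` or `i_r⁺ = i`) makes this less than
`d(D i, D j) / 2`. A common point of `A i` and `A j` would then violate the triangle inequality. -/

local notation "𝕋" => AddCircle (2 * π)

instance : Fact (0 < 2 * π) := ⟨two_pi_pos⟩

theorem cmod_eq_fract_mul (x : ℝ) : cmod x = Int.fract (x / (2 * π)) * (2 * π) := by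
  rw [cmod, Int.fract]
  field_simp [two_pi_pos.ne']

theorem cmod_nonneg (x : ℝ) : 0 ≤ cmod x := by
  rw [cmod_eq_fract_mul]
  exact mul_nonneg (Int.fract_nonneg _) two_pi_pos.le

theorem coe_cmod (x : ℝ) : ((cmod x : ℝ) : 𝕋) = x := by
  rw [cmod, AddCircle.coe_sub, sub_eq_self, AddCircle.coe_eq_zero_iff]
  exact ⟨⌊x / (2 * π)⌋, by rw [zsmul_eq_mul]; ring⟩

theorem cdist_eq_dist (p q : ℝ) : cdist p q = dist (p : 𝕋) (q : 𝕋) := by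
  rw [dist_eq_norm, ← AddCircle.coe_sub, AddCircle.norm_eq' _ two_pi_pos, abs_sub_round_eq_min,
    cdist, cmod_eq_fract_mul, cmod_eq_fract_mul, inv_mul_eq_div]
  rcases eq_or_ne (Int.fract ((p - q) / (2 * π))) 0 with h | h
  · have h' : Int.fract ((q - p) / (2 * π)) = 0 := by
      rwa [← neg_sub, neg_div, Int.fract_neg_eq_zero]
    simp [h, h']
  · rw [← neg_sub p q, neg_div, Int.fract_neg h, mul_min_of_nonneg _ _ two_pi_pos.le]
    ring_nf

theorem dist_pos_of_mem_Ico {x y : ℝ} (hx : x ∈ Ico 0 (2 * π)) (hy : y ∈ Ico 0 (2 * π))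
    (hxy : x ≠ y) : 0 < dist (x : 𝕋) (y : 𝕋) := by
  rw [← zero_add (2 * π)] at hx hy
  rwa [dist_pos, Ne, AddCircle.coe_eq_coe_iff_of_mem_Ico hx hy]

theorem dist_le_max_of_mem_arcC {c a b x : ℝ} (hx : x ∈ arcC (cmod (c - a)) (a + b)) :
    dist (x : 𝕋) (c : 𝕋) ≤ max a b := by
  set t := cmod (x - cmod (c - a))
  have hxt : (x : 𝕋) = ((c + (t - a) : ℝ) : 𝕋) := by
    simp only [t, AddCircle.coe_add, AddCircle.coe_sub, coe_cmod]
    abel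
  have ht : 0 ≤ t ∧ t ≤ a + b := ⟨cmod_nonneg _, hx.2⟩
  calc dist (x : 𝕋) (c : 𝕋) = ‖((t - a : ℝ) : 𝕋)‖ := by
        rw [hxt, dist_eq_norm, ← AddCircle.coe_sub, add_sub_cancel_left]
    _ ≤ |t - a| := QuotientAddGroup.norm_mk_le_norm
    _ ≤ max a b := abs_le.2 ⟨by linarith [le_max_left a b], by linarith [le_max_right a b]⟩

theorem IsValidDrawing.dist_lt_of_posOrSelf {V : Type*} {G : SignedGraph V} {D : V → ℝ}
    (hD : IsValidDrawing G D) {i j k : V} (hj : posOrSelf G i j) (hk : G.neg.Adj i k) :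
    dist (D i : 𝕋) (D j) < dist (D i : 𝕋) (D k) := by
  rcases hj with rfl | hj
  · rw [dist_self]
    exact dist_pos_of_mem_Ico (hD.1.2 _) (hD.1.2 _) (hD.1.1.ne hk.ne)
  · simpa only [cdist_eq_dist] using hD.2 i j k hj hk

theorem IsValidDrawing.dist_lt_of_mem_arcOf {V : Type*} {G : SignedGraph V} {D : V → ℝ}
    (hD : IsValidDrawing G D) {fl fr : V → V} (hfl : ∀ i, posOrSelf G i (fl i))
    (hfr : ∀ i, posOrSelf G i (fr i)) {i k : V} (hk : G.neg.Adj i k) {x : ℝ}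
    (hx : x ∈ arcOf D fl fr i) : dist (x : 𝕋) (D i) < dist (D i : 𝕋) (D k) / 2 := by
  rw [arcOf, add_div] at hx
  calc dist (x : 𝕋) (D i)
      ≤ max (cdist (D i) (D (fl i)) / 2) (cdist (D i) (D (fr i)) / 2) :=
        dist_le_max_of_mem_arcC hx
    _ < dist (D i : 𝕋) (D k) / 2 := by
        rw [cdist_eq_dist, cdist_eq_dist, max_div_div_right two_pos.le]
        gcongr
        exact max_lt (hD.dist_lt_of_posOrSelf (hfl i) hk) (hD.dist_lt_of_posOrSelf (hfr i) hk)

theorem arcs_disjoint_of_negative_edge_general {V : Type*}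
    (G : SignedGraph V) (D : V → ℝ) (hD : IsValidDrawing G D)
    (fl fr : V → V)
    (hfl : IsFarthestLeft G D fl) (hfr : IsFarthestRight G D fr) :
    ∀ i j : V, G.neg.Adj i j → arcOf D fl fr i ∩ arcOf D fl fr j = ∅ := by
  intro i j hij
  refine eq_empty_of_forall_notMem fun x ⟨hxi, hxj⟩ => ?_
  have hfl' i := (hfl i).1
  have hfr' i := (hfr i).1
  have hi := hD.dist_lt_of_mem_arcOf hfl' hfr' hij hxi
  have hj := hD.dist_lt_of_mem_arcOf hfl' hfr' hij.symm hxj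
  rw [dist_comm (D j : 𝕋)] at hj
  linarith [dist_triangle_left (D i : 𝕋) (D j) x]

/-- For a valid drawing D of a signed graph G, the arcs A_i built from the
farthest left/right positive neighbors are disjoint whenever ij is a negative
edge. -/
theorem arcs_disjoint_of_negative_edge {V : Type*} [Fintype V]
    (G : SignedGraph V) (D : V → ℝ) (hD : IsValidDrawing G D)
    (fl fr : V → V)
    (hfl : IsFarthestLeft G D fl) (hfr : IsFarthestRight G D fr) :
    ∀ i j : V, G.neg.Adj i j → arcOf D fl fr i ∩ arcOf D fl fr j = ∅ :=
  arcs_disjoint_of_negative_edge_general G D hD fl fr hfl hfr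
end
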